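/- Let X be a differentiable family of Hermitian rank-1 projectors, X = (x ⊗ x†)/(x† x) for a nonvanishing differentiable vector x. Then x is holomorphic in ℂPᴺ⁻¹ (∂₋x proportional to x) if and only if X·(∂₊X) = 0, which is also equivalent to (∂₋X)·X = 0. -/

import Mathlib

open Matrix

/-- Entrywise partial derivative of a vector family in the first real coordinate. -/
noncomputable def vpd1 {N : ℕ} (f : ℝ × ℝ → Fin N → ℂ) (p : ℝ × ℝ) : Fin N → ℂ :=
  fun i => fderiv ℝ (fun q => f q i) p (1, 0)

/-- Entrywise partial derivative of a vector family in the second real coordinate. -/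
noncomputable def vpd2 {N : ℕ} (f : ℝ × ℝ → Fin N → ℂ) (p : ℝ × ℝ) : Fin N → ℂ :=
  fun i => fderiv ℝ (fun q => f q i) p (0, 1)

/-- `∂₋ = (∂₁ + i∂₂)/2` for vector families. -/
noncomputable def vpdm {N : ℕ} (f : ℝ × ℝ → Fin N → ℂ) (p : ℝ × ℝ) : Fin N → ℂ :=
  ((1 : ℂ) / 2) • (vpd1 f p + Complex.I • vpd2 f p)

/-- Entrywise partial derivative of a matrix family in the first real coordinate. -/
noncomputable def pd1 {N : ℕ} (f : ℝ × ℝ → Matrix (Fin N) (Fin N) ℂ) (p : ℝ × ℝ) :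
    Matrix (Fin N) (Fin N) ℂ :=
  Matrix.of fun i j => fderiv ℝ (fun q => f q i j) p (1, 0)

/-- Entrywise partial derivative of a matrix family in the second real coordinate. -/
noncomputable def pd2 {N : ℕ} (f : ℝ × ℝ → Matrix (Fin N) (Fin N) ℂ) (p : ℝ × ℝ) :
    Matrix (Fin N) (Fin N) ℂ :=
  Matrix.of fun i j => fderiv ℝ (fun q => f q i j) p (0, 1)

/-- `∂₊ = (∂₁ - i∂₂)/2` for matrix families. -/
noncomputable def pdp {N : ℕ} (f : ℝ × ℝ → Matrix (Fin N) (Fin N) ℂ) (p : ℝ × ℝ) :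
    Matrix (Fin N) (Fin N) ℂ :=
  ((1 : ℂ) / 2) • (pd1 f p - Complex.I • pd2 f p)

/-- `∂₋ = (∂₁ + i∂₂)/2` for matrix families. -/
noncomputable def pdm {N : ℕ} (f : ℝ × ℝ → Matrix (Fin N) (Fin N) ℂ) (p : ℝ × ℝ) :
    Matrix (Fin N) (Fin N) ℂ :=
  ((1 : ℂ) / 2) • (pd1 f p + Complex.I • pd2 f p)

/-!
Write `r = x†x` and `y = ∂₋x`. The Wirtinger product rule, with `∂₊(x†) = (∂₋x)†`, gives
`∂₊X = -(∂₊r / r²) x x† + r⁻¹ ((∂₊x) x† + x y†)`. Left multiplication by `X` sends every term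
except `x y†` back onto `x x†`, and the coefficients cancel to
`X ∂₊X = r⁻¹ x (y - (x†y / r) x)†`. This vanishes iff `y` has no component orthogonal to `x`,
i.e. iff `∂₋x ∥ x`. The second equivalence is conjugate transposition: since `X` is Hermitian,
`(∂₊X)† = ∂₋X`, hence `(X ∂₊X)† = (∂₋X) X`.
-/

open scoped ComplexOrder

section LinearAlgebra

variable {R n : Type*} [Field R] [Fintype n]

theorem exists_eq_smul_iff [Star R] {v y : n → R} (hv : star v ⬝ᵥ v ≠ 0) :
    (∃ k : R, y = k • v) ↔ y = (star v ⬝ᵥ y / star v ⬝ᵥ v) • v := by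
  refine ⟨?_, fun h => ⟨_, h⟩⟩
  rintro ⟨k, rfl⟩
  rw [dotProduct_smul, smul_eq_mul, mul_div_cancel_right₀ k hv]

theorem isHermitian_projector [StarRing R] (v : n → R) :
    ((star v ⬝ᵥ v)⁻¹ • vecMulVec v (star v)).IsHermitian := by
  rw [IsHermitian, conjTranspose_smul, conjTranspose_vecMulVec, star_star, star_inv₀,
    ← star_dotProduct]

end LinearAlgebra

noncomputable def dPlus (f : ℝ × ℝ → ℂ) (p : ℝ × ℝ) : ℂ :=
  (1 / 2 : ℂ) * (fderiv ℝ f p (1, 0) - Complex.I * fderiv ℝ f p (0, 1))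

noncomputable def dMinus (f : ℝ × ℝ → ℂ) (p : ℝ × ℝ) : ℂ :=
  (1 / 2 : ℂ) * (fderiv ℝ f p (1, 0) + Complex.I * fderiv ℝ f p (0, 1))

section WirtingerCalculus

variable {f g : ℝ × ℝ → ℂ} {p : ℝ × ℝ}

theorem dPlus_mul (hf : DifferentiableAt ℝ f p) (hg : DifferentiableAt ℝ g p) :
    dPlus (fun q => f q * g q) p = dPlus f p * g p + f p * dPlus g p := by
  simp only [dPlus, fderiv_fun_mul hf hg, _root_.add_apply, _root_.smul_apply, smul_eq_mul]
  ring

theorem dPlus_inv (hf : DifferentiableAt ℝ f p) (hp : f p ≠ 0) :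
    dPlus (fun q => (f q)⁻¹) p = -dPlus f p / f p ^ 2 := by
  have hcomp : fderiv ℝ (fun q => (f q)⁻¹) p = fderiv ℝ Inv.inv (f p) ∘L fderiv ℝ f p :=
    fderiv_comp p (differentiableAt_inv hp) hf
  simp only [dPlus, hcomp, fderiv_inv' hp, ContinuousLinearMap.comp_apply, _root_.neg_apply,
    ContinuousLinearMap.mulLeftRight_apply]
  field_simp
  ring

theorem dPlus_sum {ι : Type*} (s : Finset ι) {f : ι → ℝ × ℝ → ℂ}
    (hf : ∀ k ∈ s, DifferentiableAt ℝ (f k) p) :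
    dPlus (fun q => ∑ k ∈ s, f k q) p = ∑ k ∈ s, dPlus (f k) p := by
  simp only [dPlus, fderiv_fun_sum hf, _root_.sum_apply, Finset.mul_sum, ← Finset.sum_sub_distrib]

theorem dPlus_star :
    dPlus (fun q => star (f q)) p = star (dMinus f p) := by
  rw [dPlus, dMinus, fderiv_star]
  simp only [ContinuousLinearMap.comp_apply, ContinuousLinearEquiv.coe_coe, starL'_apply,
    star_mul', star_add, Complex.star_def, map_div₀, map_one, map_ofNat, Complex.conj_I]
  ring

end WirtingerCalculus

noncomputable def vpdp {N : ℕ} (f : ℝ × ℝ → Fin N → ℂ) (p : ℝ × ℝ) : Fin N → ℂ :=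
  fun i => dPlus (fun q => f q i) p

section ProjectorFamily

variable {N : ℕ} {x : ℝ × ℝ → Fin N → ℂ} {X : ℝ × ℝ → Matrix (Fin N) (Fin N) ℂ} {p : ℝ × ℝ}

theorem vpdm_apply (i : Fin N) :
    vpdm x p i = dMinus (fun q => x q i) p := rfl

theorem pdp_apply (i j : Fin N) :
    pdp X p i j = dPlus (fun q => X q i j) p := rfl

theorem conjTranspose_pdp (hX : ∀ q, (X q).IsHermitian) :
    (pdp X p)ᴴ = pdm X p := by
  ext i j
  have hji : (fun q => X q j i) = fun q => star (X q i j) := funext fun q => ((hX q).apply j i).symm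
  rw [conjTranspose_apply, pdp_apply, hji, dPlus_star, star_star]
  rfl

theorem conjTranspose_mul_pdp (hX : ∀ q, (X q).IsHermitian) :
    (X p * pdp X p)ᴴ = pdm X p * X p := by
  rw [conjTranspose_mul, conjTranspose_pdp hX, (hX p).eq]

theorem dPlus_star_dotProduct_self (hx : ∀ i, DifferentiableAt ℝ (fun q => x q i) p) :
    dPlus (fun q => star (x q) ⬝ᵥ x q) p =
      star (vpdm x p) ⬝ᵥ x p + star (x p) ⬝ᵥ vpdp x p := by
  simp only [dotProduct, Pi.star_apply]
  rw [dPlus_sum _ fun k _ => by fun_prop]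
  simp only [dPlus_mul (hx _).star (hx _), dPlus_star, vpdp, vpdm_apply, Finset.sum_add_distrib]

theorem pdp_projector
    (hX : ∀ q, X q = (star (x q) ⬝ᵥ x q)⁻¹ • vecMulVec (x q) (star (x q)))
    (hx : ∀ i, DifferentiableAt ℝ (fun q => x q i) p) (hx0 : x p ≠ 0) :
    pdp X p =
      (-(star (vpdm x p) ⬝ᵥ x p + star (x p) ⬝ᵥ vpdp x p) / (star (x p) ⬝ᵥ x p) ^ 2) •
          vecMulVec (x p) (star (x p)) +
        (star (x p) ⬝ᵥ x p)⁻¹ •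
          (vecMulVec (vpdp x p) (star (x p)) + vecMulVec (x p) (star (vpdm x p))) := by
  have hr : DifferentiableAt ℝ (fun q => star (x q) ⬝ᵥ x q) p := by
    simp only [dotProduct, Pi.star_apply]
    fun_prop
  have hr0 : star (x p) ⬝ᵥ x p ≠ 0 := dotProduct_star_self_eq_zero.not.mpr hx0
  ext i j
  simp only [pdp_apply, hX, Matrix.smul_apply, vecMulVec_apply, Pi.star_apply, smul_eq_mul,
    Matrix.add_apply]
  rw [dPlus_mul (hr.fun_inv hr0) (by fun_prop), dPlus_inv hr hr0, dPlus_star_dotProduct_self hx,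
    dPlus_mul (hx i) (hx j).star, dPlus_star]
  simp only [vpdp, vpdm_apply]

theorem projector_mul_pdp
    (hX : ∀ q, X q = (star (x q) ⬝ᵥ x q)⁻¹ • vecMulVec (x q) (star (x q)))
    (hx : ∀ i, DifferentiableAt ℝ (fun q => x q i) p) (hx0 : x p ≠ 0) :
    X p * pdp X p = (star (x p) ⬝ᵥ x p)⁻¹ • vecMulVec (x p)
      (star (vpdm x p - (star (x p) ⬝ᵥ vpdm x p / star (x p) ⬝ᵥ x p) • x p)) := by
  rw [pdp_projector hX hx hx0, hX p]
  generalize vpdm x p = y, vpdp x p = z, x p = v at hx0 ⊢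
  have hS : star (star v ⬝ᵥ y) = star y ⬝ᵥ v := (star_dotProduct y v).symm
  have hr : star (star v ⬝ᵥ v) = star v ⬝ᵥ v := (star_dotProduct v v).symm
  have hr0 : star v ⬝ᵥ v ≠ 0 := dotProduct_star_self_eq_zero.not.mpr hx0
  simp only [Matrix.mul_add, Matrix.smul_mul, Matrix.mul_smul, vecMulVec_mul_vecMulVec]
  ext i j
  simp only [Matrix.add_apply, Matrix.smul_apply, vecMulVec_apply, Pi.smul_apply, smul_eq_mul,
    Pi.sub_apply, star_sub, star_smul, star_div₀, hS, hr, Pi.star_apply]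
  field_simp
  ring

theorem projector_mul_pdp_eq_zero_iff
    (hX : ∀ q, X q = (star (x q) ⬝ᵥ x q)⁻¹ • vecMulVec (x q) (star (x q)))
    (hx : ∀ i, DifferentiableAt ℝ (fun q => x q i) p) (hx0 : x p ≠ 0) :
    X p * pdp X p = 0 ↔ vpdm x p = (star (x p) ⬝ᵥ vpdm x p / star (x p) ⬝ᵥ x p) • x p := by
  rw [projector_mul_pdp hX hx hx0, smul_eq_zero, vecMulVec_eq_zero, star_eq_zero, sub_eq_zero]
  simp [hx0]

end ProjectorFamily

/-- For the rank-1 projector family `X = (x ⊗ x†)/(x† x)` attached to a nonvanishing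
differentiable vector family `x`: `x` is holomorphic in `ℂPᴺ⁻¹` iff `X ∂₊X = 0`, which is
also equivalent to `(∂₋X) X = 0`. -/
theorem holomorphic_iff_projector_eq {N : ℕ} (x : ℝ × ℝ → Fin N → ℂ)
    (hdiff : ∀ i, Differentiable ℝ fun q => x q i)
    (hx : ∀ p, x p ≠ 0)
    (X : ℝ × ℝ → Matrix (Fin N) (Fin N) ℂ)
    (hX : ∀ p, X p = (star (x p) ⬝ᵥ x p)⁻¹ • vecMulVec (x p) (star (x p))) :
    ((∀ p, ∃ k : ℂ, vpdm x p = k • x p) ↔ ∀ p, X p * pdp X p = 0) ∧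
      ((∀ p, X p * pdp X p = 0) ↔ ∀ p, pdm X p * X p = 0) := by
  have hherm : ∀ p, (X p).IsHermitian := fun p => hX p ▸ isHermitian_projector (x p)
  refine ⟨forall_congr' fun p => ?_, forall_congr' fun p => ?_⟩
  · rw [projector_mul_pdp_eq_zero_iff hX (fun i => hdiff i p) (hx p)]
    exact exists_eq_smul_iff (dotProduct_star_self_eq_zero.not.mpr (hx p))
  · rw [← conjTranspose_mul_pdp hherm, conjTranspose_eq_zero]
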